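/- Let 𝓛 be the lamplighter group, F̃_n = {(t, K) ∈ 𝓛 : t ∈ [0,n]∩ℤ and K ⊆ [0,n]∩ℤ}, and F_n = (F̃_n)⁻¹ · F̃_n. Then for every n ≥ 0, |F_n| = 2^n · (n² + 4n + 2). -/

import Mathlib

open scoped symmDiff

/-- The lamplighter group `ℤ ≀ ℤ₂`, realized as pairs `(t, K)` with `t ∈ ℤ` the
position of the lamplighter and `K` a finite set of integers (the lamps turned on). -/
structure Lamp where
  pos : ℤ
  lamps : Finset ℤ
deriving DecidableEq

namespace Lamp

/-- The shift `t + K` of a finite set of integers. -/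
def shift (t : ℤ) (K : Finset ℤ) : Finset ℤ := K.image (t + ·)

lemma mem_shift {t x : ℤ} {K : Finset ℤ} : x ∈ shift t K ↔ x - t ∈ K := by
  constructor
  · rintro h
    simp only [shift, Finset.mem_image] at h
    obtain ⟨k, hk, rfl⟩ := h
    simpa using hk
  · intro h
    simp only [shift, Finset.mem_image]
    exact ⟨x - t, h, by ring⟩

lemma shift_symmDiff (t : ℤ) (A B : Finset ℤ) :
    shift t (A ∆ B) = shift t A ∆ shift t B := by
  ext x
  simp [mem_shift, Finset.mem_symmDiff]

lemma shift_shift (s t : ℤ) (K : Finset ℤ) : shift s (shift t K) = shift (s + t) K := by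
  ext x
  simp [mem_shift, sub_sub]

lemma shift_zero (K : Finset ℤ) : shift 0 K = K := by
  ext x; simp [mem_shift]

lemma shift_empty (t : ℤ) : shift t (∅ : Finset ℤ) = ∅ := by
  simp [shift]

lemma empty_symmDiff (A : Finset ℤ) : (∅ : Finset ℤ) ∆ A = A := by
  ext x; simp [Finset.mem_symmDiff]

lemma symmDiff_empty (A : Finset ℤ) : A ∆ (∅ : Finset ℤ) = A := by
  ext x; simp [Finset.mem_symmDiff]

lemma symmDiff_self' (A : Finset ℤ) : A ∆ A = (∅ : Finset ℤ) := by
  ext x; simp [Finset.mem_symmDiff]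

instance : Mul Lamp := ⟨fun a b => ⟨a.pos + b.pos, a.lamps ∆ shift a.pos b.lamps⟩⟩
instance : One Lamp := ⟨⟨0, ∅⟩⟩
instance : Inv Lamp := ⟨fun a => ⟨-a.pos, shift (-a.pos) a.lamps⟩⟩

@[simp] lemma mul_pos' (a b : Lamp) : (a * b).pos = a.pos + b.pos := rfl
@[simp] lemma mul_lamps (a b : Lamp) : (a * b).lamps = a.lamps ∆ shift a.pos b.lamps := rfl
@[simp] lemma one_pos' : (1 : Lamp).pos = 0 := rfl
@[simp] lemma one_lamps : (1 : Lamp).lamps = ∅ := rfl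
@[simp] lemma inv_pos' (a : Lamp) : a⁻¹.pos = -a.pos := rfl
@[simp] lemma inv_lamps (a : Lamp) : a⁻¹.lamps = shift (-a.pos) a.lamps := rfl

@[ext] lemma ext' {a b : Lamp} (h1 : a.pos = b.pos) (h2 : a.lamps = b.lamps) : a = b := by
  cases a; cases b; simp_all

instance : Group Lamp where
  mul_assoc a b c := by
    refine ext' ?_ ?_
    · simp [add_assoc]
    · simp [shift_symmDiff, shift_shift, symmDiff_assoc]
  one_mul a := by
    refine ext' ?_ ?_
    · simp
    · rw [mul_lamps, one_lamps, one_pos', shift_zero, empty_symmDiff]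
  mul_one a := by
    refine ext' ?_ ?_
    · simp
    · rw [mul_lamps, one_lamps, shift_empty, symmDiff_empty]
  inv_mul_cancel a := by
    refine ext' ?_ ?_
    · simp
    · rw [mul_lamps, inv_lamps, inv_pos', symmDiff_self', one_lamps]

/-- The standard right Følner sets `F̃ n` of the lamplighter group. -/
def Ftilde (n : ℕ) : Set Lamp :=
  {x | x.pos ∈ Set.Icc (0 : ℤ) n ∧ ∀ k ∈ x.lamps, k ∈ Set.Icc (0 : ℤ) n}

end Lamp

open Pointwise

/-- The two-sided Følner sets `F n = (F̃ n)⁻¹ · F̃ n` of the lamplighter group. -/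
def Lamp.F (n : ℕ) : Set Lamp := (Lamp.Ftilde n)⁻¹ * Lamp.Ftilde n

/-!
An element `(s, L)` lies in `F n` iff some translate of `{0, s} ∪ L` fits into `[0, n]`, that is,
iff `{0, s} ∪ L` has diameter at most `n`. For fixed `s` with `|s| ≤ n` this says that `L` is a
subset of diameter at most `n` of the window `[max s 0 - n, min s 0 + n]`, which has
`2n - |s| + 1` points. An interval of `n + k + 1` points has `(k + 2) 2^n` such subsets (peel off
the left endpoint: the subsets containing it are the `2^n` subsets of its first `n + 1` points
that contain it), and summing `(n - |s| + 2) 2^n` over `|s| ≤ n` gives `2^n (n² + 4n + 2)`.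
-/

namespace Lamp

open Finset

def DiamLE (n : ℕ) (P : Finset ℤ) : Prop := ∀ p ∈ P, ∀ q ∈ P, p - q ≤ n

instance (n : ℕ) : DecidablePred (DiamLE n) := fun _ => by unfold DiamLE; infer_instance

def boundedSubsets (n : ℕ) (I : Finset ℤ) : Finset (Finset ℤ) := I.powerset.filter (DiamLE n)

@[simp] theorem mem_boundedSubsets {n : ℕ} {I L : Finset ℤ} :
    L ∈ boundedSubsets n I ↔ L ⊆ I ∧ DiamLE n L := by
  rw [boundedSubsets, mem_filter, mem_powerset]

theorem diamLE_of_subset_Icc {n : ℕ} {a : ℤ} {P : Finset ℤ} (h : P ⊆ Icc a (a + n)) :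
    DiamLE n P := fun p hp q hq => by
  have hp' := mem_Icc.mp (h hp)
  have hq' := mem_Icc.mp (h hq)
  omega

theorem exists_forall_add_mem_Icc_iff {n : ℕ} {P : Finset ℤ} :
    (∃ t : ℤ, ∀ p ∈ P, t + p ∈ Set.Icc (0 : ℤ) n) ↔ DiamLE n P := by
  constructor
  · rintro ⟨t, ht⟩ p hp q hq
    have hp' := ht p hp
    have hq' := ht q hq
    rw [Set.mem_Icc] at hp' hq'
    omega
  · intro h
    obtain rfl | hne := P.eq_empty_or_nonempty
    · exact ⟨0, by simp⟩
    refine ⟨-P.min' hne, fun p hp => ?_⟩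
    have hmin := P.min'_le p hp
    have hdiam := h p hp _ (P.min'_mem hne)
    rw [Set.mem_Icc]
    omega

-- `w⁻¹ y = (y.pos - w.pos, -w.pos + (w.lamps ∆ y.lamps))`; conversely `z = (t, ∅)⁻¹ (t + z)`.
theorem mem_F_iff_exists {n : ℕ} {z : Lamp} :
    z ∈ F n ↔ ∃ t : ℤ, ∀ p ∈ insert 0 (insert z.pos z.lamps), t + p ∈ Set.Icc (0 : ℤ) n := by
  simp only [forall_mem_insert, add_zero]
  constructor
  · rintro ⟨x, hx, y, ⟨hy_pos, hy_lamps⟩, rfl⟩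
    obtain ⟨w, ⟨hw_pos, hw_lamps⟩, rfl⟩ : ∃ w ∈ Ftilde n, w⁻¹ = x := ⟨x⁻¹, hx, inv_inv x⟩
    refine ⟨w.pos, hw_pos, by simpa using hy_pos, fun k hk => ?_⟩
    simp only [mul_lamps, inv_lamps, inv_pos', mem_symmDiff, mem_shift, sub_neg_eq_add,
      add_comm k] at hk
    rcases hk with ⟨hk, -⟩ | ⟨hk, -⟩
    exacts [hw_lamps _ hk, hy_lamps _ hk]
  · rintro ⟨t, ht, hpos, hlamps⟩
    refine ⟨⟨t, ∅⟩⁻¹, by simpa [Ftilde, shift_empty] using ht, ⟨t + z.pos, shift t z.lamps⟩,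
      ⟨hpos, fun k hk => ?_⟩, ?_⟩
    · simpa using hlamps (k - t) (mem_shift.mp hk)
    · ext <;> simp [shift_empty, empty_symmDiff, shift_shift, shift_zero]

theorem mem_F_iff {n : ℕ} {z : Lamp} : z ∈ F n ↔ DiamLE n (insert 0 (insert z.pos z.lamps)) :=
  mem_F_iff_exists.trans exists_forall_add_mem_Icc_iff

theorem diamLE_insert_zero_insert_iff {n : ℕ} {s : ℤ} {L : Finset ℤ} :
    DiamLE n (insert 0 (insert s L)) ↔
      s ∈ Icc (-n : ℤ) n ∧ L ∈ boundedSubsets n (Icc (max s 0 - n) (min s 0 + n)) := by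
  simp only [DiamLE, forall_mem_insert, mem_boundedSubsets, subset_iff, mem_Icc]
  constructor
  · rintro ⟨⟨-, h0s, h0L⟩, ⟨hs0, -, hsL⟩, hL⟩
    refine ⟨⟨by omega, by omega⟩, fun x hx => ?_, fun p hp q hq => (hL p hp).2.2 q hq⟩
    have := h0L x hx
    have := hsL x hx
    have := hL x hx
    omega
  · rintro ⟨hs, hsub, hdiam⟩
    refine ⟨⟨by omega, by omega, fun x hx => ?_⟩, ⟨by omega, by omega, fun x hx => ?_⟩,
      fun x hx => ⟨?_, ?_, hdiam x hx⟩⟩ <;>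
    · have := hsub hx
      omega

theorem F_eq_image (n : ℕ) :
    F n = (fun p : (_ : ℤ) × Finset ℤ => (⟨p.1, p.2⟩ : Lamp)) ''
      ↑((Icc (-n : ℤ) n).sigma fun s => boundedSubsets n (Icc (max s 0 - n) (min s 0 + n))) := by
  ext z
  simp only [mem_F_iff, diamLE_insert_zero_insert_iff, Set.mem_image, mem_coe, mem_sigma]
  constructor
  · intro h
    exact ⟨⟨z.pos, z.lamps⟩, h, rfl⟩
  · rintro ⟨⟨s, L⟩, h, rfl⟩
    exact h

theorem card_boundedSubsets_Icc (n k : ℕ) (a : ℤ) :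
    #(boundedSubsets n (Icc a (a + n + k))) = (k + 2) * 2 ^ n := by
  induction k generalizing a with
  | zero =>
    rw [Nat.cast_zero, add_zero, boundedSubsets,
      filter_true_of_mem fun L hL => diamLE_of_subset_Icc (mem_powerset.mp hL),
      card_powerset, Int.card_Icc, show (a + n + 1 - a).toNat = n + 1 by omega, pow_succ]
    ring
  | succ k ih =>
    set 𝒜 := boundedSubsets n (Icc a (a + n + (k + 1 : ℕ)))
    have hmem : 𝒜.memberSubfamily a = (Icc (a + 1) (a + n)).powerset := by
      ext L
      simp only [mem_memberSubfamily, 𝒜, mem_boundedSubsets, mem_powerset, subset_iff, mem_Icc]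
      constructor
      · rintro ⟨⟨hsub, hdiam⟩, ha⟩ x hx
        have hx_mem := hsub (mem_insert_of_mem hx)
        have hx_sub_a := hdiam x (mem_insert_of_mem hx) a (mem_insert_self a L)
        have hx_ne := ne_of_mem_of_not_mem hx ha
        omega
      · intro h
        have h' : ∀ x ∈ insert a L, a ≤ x ∧ x ≤ a + n := fun x hx => by
          rcases mem_insert.mp hx with rfl | hx
          · omega
          · have := h hx
            omega
        refine ⟨⟨fun x hx => ?_, diamLE_of_subset_Icc fun x hx => mem_Icc.mpr (h' x hx)⟩,
          fun ha => ?_⟩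
        · have := h' x hx
          omega
        · have := h ha
          omega
    have hnon : 𝒜.nonMemberSubfamily a = boundedSubsets n (Icc (a + 1) (a + 1 + n + k)) := by
      ext L
      simp only [mem_nonMemberSubfamily, 𝒜, mem_boundedSubsets, subset_iff, mem_Icc]
      constructor
      · rintro ⟨⟨hsub, hdiam⟩, ha⟩
        refine ⟨fun x hx => ?_, hdiam⟩
        have := hsub hx
        have := ne_of_mem_of_not_mem hx ha
        omega
      · rintro ⟨hsub, hdiam⟩
        refine ⟨⟨fun x hx => ?_, hdiam⟩, fun ha => ?_⟩
        · have := hsub hx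
          omega
        · have := hsub ha
          omega
    rw [← card_memberSubfamily_add_card_nonMemberSubfamily a, hmem, hnon, ih, card_powerset,
      Int.card_Icc, show (a + n + 1 - (a + 1)).toNat = n by omega]
    ring

theorem card_boundedSubsets_window {n : ℕ} {s : ℤ} (hs : s ∈ Icc (-n : ℤ) n) :
    #(boundedSubsets n (Icc (max s 0 - n) (min s 0 + n))) = (n - s.natAbs + 2) * 2 ^ n := by
  have := mem_Icc.mp hs
  rw [show min s 0 + n = max s 0 - n + n + (n - s.natAbs : ℕ) by omega, card_boundedSubsets_Icc]

theorem sum_Icc_natAbs (n : ℕ) :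
    ∑ s ∈ Icc (-n : ℤ) n, (n - s.natAbs + 2) = n ^ 2 + 4 * n + 2 := by
  induction n with
  | zero => simp
  | succ n ih =>
    have hIcc : Icc (-(n + 1 : ℕ) : ℤ) (n + 1 : ℕ) =
        insert (-(n + 1 : ℕ) : ℤ) (insert ((n + 1 : ℕ) : ℤ) (Icc (-n : ℤ) n)) := by
      ext
      simp only [mem_Icc, mem_insert]
      omega
    have hstep : ∀ s ∈ Icc (-n : ℤ) n, n + 1 - s.natAbs + 2 = (n - s.natAbs + 2) + 1 :=
      fun s hs => by have := mem_Icc.mp hs; omega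
    rw [hIcc, sum_insert (by simp only [mem_insert, mem_Icc]; omega),
      sum_insert (by simp only [mem_Icc]; omega), sum_congr rfl hstep, sum_add_distrib, ih,
      sum_const, Int.card_Icc, Int.natAbs_neg, Int.natAbs_natCast, Nat.sub_self, smul_eq_mul,
      mul_one, show ((n : ℤ) + 1 - -n).toNat = 2 * n + 1 by omega]
    ring

end Lamp

/-- The cardinality of `F n = (F̃ n)⁻¹ F̃ n` is `2^n (n² + 4n + 2)`. -/
theorem stmt14 (n : ℕ) :
    (Lamp.F n).ncard = 2 ^ n * (n ^ 2 + 4 * n + 2) := by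
  have hinj : Function.Injective fun p : (_ : ℤ) × Finset ℤ => (⟨p.1, p.2⟩ : Lamp) := by
    rintro ⟨_, _⟩ ⟨_, _⟩ h
    cases h
    rfl
  rw [Lamp.F_eq_image, Set.ncard_image_of_injective _ hinj, Set.ncard_coe_finset,
    Finset.card_sigma, Finset.sum_congr rfl fun s hs => Lamp.card_boundedSubsets_window hs,
    ← Finset.sum_mul, Lamp.sum_Icc_natAbs, mul_comm]
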